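/- arXiv:1811.04654 — 2 statements merged into one kernel-verified Lean document; each statement's English description precedes it below -/
import Mathlib

section
/- Let D be a Delone set in ℝ^d with finite local complexity (FLC). Suppose that 0 is a limit point of the set G_D = {a ∈ ℝ^d : χ_a is weakly D-equivariant} (i.e. 0 ∈ closure(G_D \ {0})); by a theorem of Kellendonk–Sadun, G_D is exactly the group of topological eigenvalues of the hull dynamical system of D. Then for any L1, L2 > 0 and any ε > 0 there exist R1, R2 > 0 such that |R1 − L1| < ε, |R2 − L2| < ε, and D has (R1,R2)-stripe structure. -/
/-!
Weakly equivariant characters form an additive monoid (the circle distance `rhoT` is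
subadditive), so from a nonzero weakly equivariant `a` of small norm one gets weakly
equivariant multiples `k • a` whose norms `k‖a‖` come arbitrarily close to `1 / L1`.
If `b` is weakly equivariant, points `x, y` with the same `R`-patch have
`⟪y - x, b⟫` within `L2 ‖b‖` of an integer; dividing by `‖b‖` says that `y` lies in the
stripe of period `‖b‖⁻¹` and half-width `L2` around `x` in direction `b / ‖b‖`.
-/

open Metric Set
open scoped RealInnerProductSpace

noncomputable section

/-- Euclidean space `ℝ^d`. -/
abbrev Euc (d : ℕ) := EuclideanSpace ℝ (Fin d)

variable {d : ℕ}

/-- The transl `D - x = {y - x : y ∈ D}` of a subset of `ℝ^d`. -/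
def transl (D : Set (Euc d)) (x : Euc d) : Set (Euc d) := (fun y => y - x) '' D

/-- The metric `ρ_𝕋` on `𝕋` pulled back along `θ ↦ e^{2πiθ}`:
`ρ_𝕋(e^{2πiθ}, e^{2πiθ'}) = min_{n ∈ ℤ} |θ - θ' + n|`. -/
def rhoT (θ θ' : ℝ) : ℝ := sInf { r : ℝ | ∃ n : ℤ, r = |θ - θ' + (n : ℝ)| }

/-- The character `χ_a(x) = exp(2πi⟨x,a⟩)` is weakly `D`-equivariant: for every `ε > 0`
there is `R > 0` such that `(D-x) ∩ B(0,R) = (D-y) ∩ B(0,R)` implies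
`ρ_𝕋(χ_a x, χ_a y) < ε`. -/
def WeaklyEquivariant (D : Set (Euc d)) (a : Euc d) : Prop :=
  ∀ ε > 0, ∃ R > 0, ∀ x y : Euc d,
    transl D x ∩ closedBall 0 R = transl D y ∩ closedBall 0 R →
    rhoT (⟪x, a⟫) (⟪y, a⟫) < ε

/-- The stripe `S(a,b,L1,L2) = {x : ⟨x-b,a⟩ ∈ L1·ℤ + [-L2,L2]}`. -/
def stripeSet (a b : Euc d) (L1 L2 : ℝ) : Set (Euc d) :=
  { x | ∃ n : ℤ, ∃ t ∈ Icc (-L2) L2, (⟪x - b, a⟫) = L1 * n + t }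

/-- `D` has `(L1,L2)`-stripe structure with direction `a` and radius `R`. -/
def StripeStructureWith (D : Set (Euc d)) (a : Euc d) (L1 L2 R : ℝ) : Prop :=
  ∀ x : Euc d,
    { y : Euc d | transl D x ∩ closedBall 0 R = transl D y ∩ closedBall 0 R }
      ⊆ stripeSet a x L1 L2

/-- `D` has `(L1,L2)`-stripe structure. -/
def HasStripeStructure (D : Set (Euc d)) (L1 L2 : ℝ) : Prop :=
  ∃ a : Euc d, ‖a‖ = 1 ∧ ∃ R > 0, StripeStructureWith D a L1 L2 R

/-- `D` is `r`-uniformly discrete. -/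
def UnifDiscrete (D : Set (Euc d)) (r : ℝ) : Prop :=
  ∀ x ∈ D, ∀ y ∈ D, x ≠ y → r < dist x y

/-- `D` is `R`-relatively dense. -/
def RelDense (D : Set (Euc d)) (R : ℝ) : Prop :=
  ∀ x : Euc d, ∃ y ∈ D, dist x y < R

/-- `D` is an `(R,r)`-Delone set. -/
def IsDeloneWith (D : Set (Euc d)) (R r : ℝ) : Prop :=
  0 < R ∧ 0 < r ∧ RelDense D R ∧ UnifDiscrete D r

/-- `D` is a Delone set. -/
def IsDelone (D : Set (Euc d)) : Prop := ∃ R r : ℝ, IsDeloneWith D R r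

/-- `D` has finite local complexity: for every compact `K`, the family
`{(D-x) ∩ K : x ∈ ℝ^d}` is finite modulo translation. -/
def FLC (D : Set (Euc d)) : Prop :=
  ∀ K : Set (Euc d), IsCompact K →
    ∃ F : Set (Set (Euc d)), F.Finite ∧
      ∀ x : Euc d, ∃ P ∈ F, ∃ t : Euc d, transl D x ∩ K = transl P t

/-- `D` is repetitive. -/
def Repetitive (D : Set (Euc d)) : Prop :=
  ∀ K : Set (Euc d), IsCompact K →
    ∃ R > 0, RelDense { x : Euc d | transl D x ∩ K = D ∩ K } R

/-- `D2` is locally derivable from `D1` (`D1 ⟶ D2`). -/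
def LocDerivable (D1 D2 : Set (Euc d)) : Prop :=
  ∃ R0 ≥ (0 : ℝ), ∀ x y : Euc d, ∀ L ≥ (0 : ℝ),
    transl D1 x ∩ closedBall 0 (L + R0) = transl D1 y ∩ closedBall 0 (L + R0) →
    transl D2 x ∩ closedBall 0 L = transl D2 y ∩ closedBall 0 L

lemma rhoT_le (θ θ' : ℝ) (n : ℤ) : rhoT θ θ' ≤ |θ - θ' + n| :=
  csInf_le (by exact ⟨0, by rintro r ⟨m, rfl⟩; positivity⟩) ⟨n, rfl⟩

lemma le_rhoT {c θ θ' : ℝ} (h : ∀ n : ℤ, c ≤ |θ - θ' + n|) : c ≤ rhoT θ θ' :=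
  le_csInf ⟨_, 0, rfl⟩ (by rintro r ⟨n, rfl⟩; exact h n)

lemma exists_int_abs_lt_of_rhoT_lt {θ θ' ε : ℝ} (h : rhoT θ θ' < ε) :
    ∃ n : ℤ, |θ - θ' + n| < ε := by
  obtain ⟨r, ⟨n, rfl⟩, hr⟩ := exists_lt_of_csInf_lt (by exact ⟨_, 0, rfl⟩) h
  exact ⟨n, hr⟩

lemma rhoT_add_le (θ₁ θ₁' θ₂ θ₂' : ℝ) :
    rhoT (θ₁ + θ₂) (θ₁' + θ₂') ≤ rhoT θ₁ θ₁' + rhoT θ₂ θ₂' := by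
  have bound₂ : ∀ n₁ : ℤ, rhoT (θ₁ + θ₂) (θ₁' + θ₂') - |θ₁ - θ₁' + n₁| ≤ rhoT θ₂ θ₂' :=
    fun n₁ => le_rhoT fun n₂ => by
      have hsum := rhoT_le (θ₁ + θ₂) (θ₁' + θ₂') (n₁ + n₂)
      have hsplit : θ₁ + θ₂ - (θ₁' + θ₂') + ((n₁ + n₂ : ℤ) : ℝ) =
          (θ₁ - θ₁' + n₁) + (θ₂ - θ₂' + n₂) := by push_cast; ring
      rw [hsplit] at hsum
      linarith [abs_add_le (θ₁ - θ₁' + n₁) (θ₂ - θ₂' + n₂)]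
  have bound₁ : rhoT (θ₁ + θ₂) (θ₁' + θ₂') - rhoT θ₂ θ₂' ≤ rhoT θ₁ θ₁' :=
    le_rhoT fun n₁ => by linarith [bound₂ n₁]
  linarith

lemma inter_closedBall_eq_of_le {X : Type*} [PseudoMetricSpace X] {A B : Set X} {c : X}
    {r R : ℝ} (hrR : r ≤ R) (h : A ∩ closedBall c R = B ∩ closedBall c R) :
    A ∩ closedBall c r = B ∩ closedBall c r := by
  have hsub := closedBall_subset_closedBall (x := c) hrR
  rw [← inter_eq_self_of_subset_right hsub, ← inter_assoc, h, inter_assoc]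

def weaklyEquivariantAddSubmonoid (D : Set (Euc d)) : AddSubmonoid (Euc d) where
  carrier := { a | WeaklyEquivariant D a }
  zero_mem' := fun ε hε => ⟨1, one_pos, fun x y _ => by
    simpa using (rhoT_le 0 0 0).trans_lt (by simpa using hε)⟩
  add_mem' := by
    intro a b ha hb ε hε
    obtain ⟨Ra, hRa, ha⟩ := ha (ε / 2) (half_pos hε)
    obtain ⟨Rb, -, hb⟩ := hb (ε / 2) (half_pos hε)
    refine ⟨max Ra Rb, lt_max_of_lt_left hRa, fun x y h => ?_⟩
    have hxa := ha x y (inter_closedBall_eq_of_le (le_max_left _ _) h)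
    have hxb := hb x y (inter_closedBall_eq_of_le (le_max_right _ _) h)
    rw [inner_add_right, inner_add_right]
    linarith [rhoT_add_le ⟪x, a⟫ ⟪y, a⟫ ⟪x, b⟫ ⟪y, b⟫]

lemma hasStripeStructure_of_weaklyEquivariant {D : Set (Euc d)} {b : Euc d}
    (hb : WeaklyEquivariant D b) (hb₀ : b ≠ 0) {L : ℝ} (hL : 0 < L) :
    HasStripeStructure D ‖b‖⁻¹ L := by
  have hβ : 0 < ‖b‖ := norm_pos_iff.mpr hb₀
  obtain ⟨R, hR, hpatch⟩ := hb (L * ‖b‖) (by positivity)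
  refine ⟨‖b‖⁻¹ • b, by simp [norm_smul, hβ.ne'], R, hR, fun x y hxy => ?_⟩
  obtain ⟨n, hn⟩ := exists_int_abs_lt_of_rhoT_lt (hpatch x y hxy)
  -- `⟪y - x, b⟫ = n - c` with `|c| < L ‖b‖`
  set c : ℝ := ⟪x, b⟫ - ⟪y, b⟫ + n
  refine ⟨n, -(‖b‖⁻¹ * c), abs_le.mp ?_, ?_⟩
  · rw [abs_neg, abs_mul, abs_inv, abs_norm, inv_mul_le_iff₀ hβ, mul_comm]
    exact hn.le
  · rw [real_inner_smul_right, inner_sub_left]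
    field_simp
    ring

/-- Choosing `k = ⌈(L α)⁻¹⌉` puts `k α` in `[L⁻¹, L⁻¹ + α)`. -/
lemma exists_nat_abs_inv_mul_sub_lt {L α : ℝ} (hL : 0 < L) (hα : 0 < α) :
    ∃ k : ℕ, 0 < k ∧ |((k : ℝ) * α)⁻¹ - L| < L ^ 2 * α := by
  set k := ⌈(L * α)⁻¹⌉₊
  have hk : 0 < k := Nat.ceil_pos.mpr (by positivity)
  have hscale : (L * α)⁻¹ * α = L⁻¹ := by field_simp
  have hkα_lb : L⁻¹ ≤ k * α := by
    have := mul_le_mul_of_nonneg_right (Nat.le_ceil (L * α)⁻¹) hα.le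
    rwa [hscale] at this
  have hkα_ub : k * α < L⁻¹ + α := by
    have := mul_lt_mul_of_pos_right (Nat.ceil_lt_add_one (by positivity : 0 ≤ (L * α)⁻¹)) hα
    rwa [add_mul, one_mul, hscale] at this
  have hkα : 0 < (k : ℝ) * α := by positivity
  have hinv_le : (k * α)⁻¹ ≤ L := by
    rw [inv_le_comm₀ hkα hL]; exact hkα_lb
  refine ⟨k, hk, ?_⟩
  rw [abs_sub_comm, abs_of_nonneg (sub_nonneg.mpr hinv_le)]
  have hone : 1 ≤ L * (k * α) := by
    have := mul_le_mul_of_nonneg_left hkα_lb hL.le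
    rwa [mul_inv_cancel₀ hL.ne'] at this
  have hnum : L * (k * α) - 1 < L * α := by
    have := mul_lt_mul_of_pos_left hkα_ub hL
    rw [mul_add, mul_inv_cancel₀ hL.ne'] at this
    linarith
  calc L - (k * α)⁻¹ = (L * (k * α) - 1) * (k * α)⁻¹ := by field_simp
    _ ≤ (L * (k * α) - 1) * L := mul_le_mul_of_nonneg_left hinv_le (by linarith)
    _ < (L * α) * L := mul_lt_mul_of_pos_right hnum hL
    _ = L ^ 2 * α := by ring

theorem stmt3_general (d : ℕ) (D : Set (Euc d))
    (h0 : (0 : Euc d) ∈ closure ({ a : Euc d | WeaklyEquivariant D a } \ {0})) :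
    ∀ L1 > (0 : ℝ), ∀ L2 > (0 : ℝ), ∀ ε > (0 : ℝ),
      ∃ R1 > (0 : ℝ), ∃ R2 > (0 : ℝ),
        |R1 - L1| < ε ∧ |R2 - L2| < ε ∧ HasStripeStructure D R1 R2 := by
  intro L1 hL1 L2 hL2 ε hε
  obtain ⟨a, ⟨ha, ha₀ : a ≠ 0⟩, hsmall⟩ :=
    Metric.mem_closure_iff.mp h0 (ε / L1 ^ 2) (by positivity)
  rw [dist_zero_left] at hsmall
  obtain ⟨k, hk, hnear⟩ := exists_nat_abs_inv_mul_sub_lt hL1 (norm_pos_iff.mpr ha₀)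
  have hb : WeaklyEquivariant D ((k : ℝ) • a) := by
    rw [Nat.cast_smul_eq_nsmul]
    exact (weaklyEquivariantAddSubmonoid D).nsmul_mem ha k
  have hb₀ : (k : ℝ) • a ≠ 0 := smul_ne_zero (Nat.cast_pos.mpr hk).ne' ha₀
  refine ⟨‖(k : ℝ) • a‖⁻¹, by positivity, L2, hL2, ?_, by simpa using hε,
    hasStripeStructure_of_weaklyEquivariant hb hb₀ hL2⟩
  calc |‖(k : ℝ) • a‖⁻¹ - L1| = |((k : ℝ) * ‖a‖)⁻¹ - L1| := by
        rw [norm_smul, Real.norm_natCast]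
    _ < L1 ^ 2 * ‖a‖ := hnear
    _ < L1 ^ 2 * (ε / L1 ^ 2) := by gcongr
    _ = ε := by field_simp

/-- if `D` is an FLC Delone set and `0` is a limit point of the group
`G_D = {a : χ_a is weakly D-equivariant}` (the group of topological eigenvalues of the
hull of `D`, by Kellendonk–Sadun), then for all `L1, L2, ε > 0` there are `R1, R2 > 0`
with `|R1 - L1| < ε`, `|R2 - L2| < ε` such that `D` has `(R1,R2)`-stripe structure. -/
theorem stmt3 (d : ℕ) (D : Set (Euc d)) (hDel : IsDelone D) (hFLC : FLC D)
    (h0 : (0 : Euc d) ∈ closure ({ a : Euc d | WeaklyEquivariant D a } \ {0})) :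
    ∀ L1 > (0 : ℝ), ∀ L2 > (0 : ℝ), ∀ ε > (0 : ℝ),
      ∃ R1 > (0 : ℝ), ∃ R2 > (0 : ℝ),
        |R1 - L1| < ε ∧ |R2 - L2| < ε ∧ HasStripeStructure D R1 R2 :=
  stmt3_general d D h0
end
end

section
/- Let D be a repetitive (R,r)-Delone set in ℝ^d and let f : ℝ^d → ℝ be a bounded (not necessarily continuous) function such that whenever a, b, c, d ∈ D satisfy a − b = c − d, one has f(a) − f(b) = f(c) − f(d). Then for every ε > 0 there exists a Delone set D_ε in ℝ^d such that: (1) D_ε ⊆ D; (2) D_ε is locally derivable from D; and (3) |f(a) − f(b)| < ε for all a, b ∈ D_ε. -/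
open Metric Set
open scoped RealInnerProductSpace

noncomputable section

variable {d : ℕ}

/-!
Pick `a ∈ D` with `f a` within `ε/2` of `sup f(D)` and let `Dε` be the set of occurrences of a
large patch of `D` around `a`. Such a set lies in `D`, is locally derivable from `D`, and is
relatively dense by repetitivity. The patch can be taken so large that `f > f a - ε/2` on `Dε`:
otherwise, for a point `q ∈ D` where `f` is within `c` of its infimum on `D` and an occurrence
`t` of the patch of radius `‖q - a‖` with `f t ≤ f a - c`, the point `q - a + t` lies in `D` and,
by the difference condition, `f (q - a + t) = f q + f t - f a` is below that infimum.
-/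

lemma mem_transl {D : Set (Euc d)} {x y : Euc d} : y ∈ transl D x ↔ y + x ∈ D := by
  simp [transl, sub_eq_iff_eq_add]

@[simp]
lemma transl_zero (D : Set (Euc d)) : transl D 0 = D := by
  ext y; simp [mem_transl]

lemma transl_add_inter_closedBall (D : Set (Euc d)) (x w : Euc d) (ρ : ℝ) :
    transl D (w + x) ∩ closedBall 0 ρ = transl (transl D x ∩ closedBall w ρ) w := by
  ext u
  simp [mem_transl, mem_closedBall, dist_eq_norm, add_assoc]

lemma UnifDiscrete.mono {D D' : Set (Euc d)} {r : ℝ} (hD : UnifDiscrete D r) (h : D' ⊆ D) :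
    UnifDiscrete D' r :=
  fun x hx y hy hxy => hD x (h hx) y (h hy) hxy

def occurrenceSet (D : Set (Euc d)) (a : Euc d) (ρ : ℝ) : Set (Euc d) :=
  {t | transl D t ∩ closedBall 0 ρ = transl D a ∩ closedBall 0 ρ}

section occurrenceSet

variable {D : Set (Euc d)} {a : Euc d} {ρ : ℝ}

lemma add_mem_of_mem_occurrenceSet {t : Euc d}
    (ht : t ∈ occurrenceSet D a ρ) (u : Euc d) (hu : ‖u‖ ≤ ρ) (hua : u + a ∈ D) : u + t ∈ D := by
  have hu : u ∈ transl D a ∩ closedBall 0 ρ := ⟨mem_transl.2 hua, mem_closedBall_zero_iff.2 hu⟩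
  rw [← ht] at hu
  exact mem_transl.1 hu.1

lemma occurrenceSet_subset (ha : a ∈ D) (hρ : 0 ≤ ρ) : occurrenceSet D a ρ ⊆ D := fun t ht => by
  simpa using add_mem_of_mem_occurrenceSet ht 0 (by simpa using hρ) (by simpa using ha)

lemma add_mem_occurrenceSet_congr {x y w : Euc d} {L : ℝ} (hw : ‖w‖ ≤ L)
    (h : transl D x ∩ closedBall 0 (L + ρ) = transl D y ∩ closedBall 0 (L + ρ)) :
    w + x ∈ occurrenceSet D a ρ ↔ w + y ∈ occurrenceSet D a ρ := by
  have hball : closedBall w ρ ⊆ closedBall 0 (L + ρ) := by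
    simpa using closedBall_subset_closedBall' (x := w) (y := 0) (ε₁ := ρ) (ε₂ := L + ρ)
      (by simpa [add_comm] using hw)
  have hpatch : transl D x ∩ closedBall w ρ = transl D y ∩ closedBall w ρ := by
    rw [← inter_eq_right.2 hball, ← inter_assoc, h, inter_assoc]
  simp only [occurrenceSet, mem_ofPred_eq, transl_add_inter_closedBall, hpatch]

lemma locDerivable_occurrenceSet (hρ : 0 ≤ ρ) : LocDerivable D (occurrenceSet D a ρ) := by
  refine ⟨ρ, hρ, fun x y L _ h => ?_⟩
  ext w
  simp only [mem_inter_iff, mem_transl, mem_closedBall_zero_iff]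
  exact and_congr_left fun hw => add_mem_occurrenceSet_congr hw h

lemma Repetitive.exists_relDense_occurrenceSet (hrep : Repetitive D) (a : Euc d) (ρ : ℝ) :
    ∃ R > 0, RelDense (occurrenceSet D a ρ) R := by
  obtain ⟨R, hR, hdense⟩ := hrep (closedBall a ρ) (isCompact_closedBall a ρ)
  refine ⟨R, hR, fun z => ?_⟩
  obtain ⟨x, hx, hzx⟩ := hdense (z - a)
  refine ⟨a + x, ?_, by rwa [dist_eq_norm, ← sub_sub, ← dist_eq_norm]⟩
  have hx : transl D x ∩ closedBall a ρ = transl D 0 ∩ closedBall a ρ := by simpa using hx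
  simp only [occurrenceSet, mem_ofPred_eq, transl_add_inter_closedBall, hx]
  simpa using (transl_add_inter_closedBall D 0 a ρ).symm

end occurrenceSet

lemma exists_radius_forall_occurrenceSet_sub_lt {D : Set (Euc d)} {f : Euc d → ℝ}
    (hbdd : BddBelow (f '' D))
    (hf : ∀ a ∈ D, ∀ b ∈ D, ∀ c ∈ D, ∀ e ∈ D, a - b = c - e → f a - f b = f c - f e)
    {a : Euc d} (ha : a ∈ D) {c : ℝ} (hc : 0 < c) :
    ∃ ρ ≥ 0, ∀ t ∈ occurrenceSet D a ρ, f a - c < f t := by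
  obtain ⟨_, ⟨q, hq, rfl⟩, hfq⟩ :=
    exists_lt_of_csInf_lt (⟨f a, a, ha, rfl⟩ : (f '' D).Nonempty)
      (lt_add_of_pos_right (sInf (f '' D)) hc)
  refine ⟨‖q - a‖, norm_nonneg _, fun t ht => ?_⟩
  by_contra! hft
  have htD : t ∈ D := occurrenceSet_subset ha (norm_nonneg _) ht
  have hq' : q - a + t ∈ D :=
    add_mem_of_mem_occurrenceSet ht _ le_rfl (by rwa [sub_add_cancel])
  have hshift : f (q - a + t) - f t = f q - f a := hf _ hq' _ htD _ hq _ ha (by abel)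
  have hmin : sInf (f '' D) ≤ f (q - a + t) := csInf_le hbdd (mem_image_of_mem f hq')
  linarith

/-- let `D` be a repetitive `(R,r)`-Delone set and `f : ℝ^d → ℝ` a bounded
function such that `a - b = c - e` with `a,b,c,e ∈ D` implies `f a - f b = f c - f e`.
Then for every `ε > 0` there is a Delone set `Dε ⊆ D`, locally derivable from `D`,
such that `|f a - f b| < ε` for all `a, b ∈ Dε`. -/
theorem stmt5 (d : ℕ) (D : Set (Euc d)) (R r : ℝ)
    (hDel : IsDeloneWith D R r) (hrep : Repetitive D)
    (f : Euc d → ℝ) (hbdd : ∃ M : ℝ, ∀ x : Euc d, |f x| ≤ M)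
    (hf : ∀ a ∈ D, ∀ b ∈ D, ∀ c ∈ D, ∀ e ∈ D, a - b = c - e → f a - f b = f c - f e) :
    ∀ ε > (0 : ℝ), ∃ Dε : Set (Euc d),
      IsDelone Dε ∧ Dε ⊆ D ∧ LocDerivable D Dε ∧
      ∀ a ∈ Dε, ∀ b ∈ Dε, |f a - f b| < ε := by
  obtain ⟨-, hr, hRD, hUD⟩ := hDel
  obtain ⟨M, hM⟩ := hbdd
  intro ε hε
  have hne : (f '' D).Nonempty := let ⟨p, hp, _⟩ := hRD 0; ⟨f p, p, hp, rfl⟩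
  have habove : BddAbove (f '' D) :=
    ⟨M, forall_mem_image.2 fun x _ => (le_abs_self _).trans (hM x)⟩
  have hbelow : BddBelow (f '' D) := ⟨-M, forall_mem_image.2 fun x _ => neg_le_of_abs_le (hM x)⟩
  obtain ⟨_, ⟨a, ha, rfl⟩, hfa⟩ :=
    exists_lt_of_lt_csSup hne (sub_lt_self (sSup (f '' D)) (half_pos hε))
  obtain ⟨ρ, hρ, hfar⟩ := exists_radius_forall_occurrenceSet_sub_lt hbelow hf ha (half_pos hε)
  obtain ⟨R', hR', hdense⟩ := hrep.exists_relDense_occurrenceSet a ρ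
  have hsub := occurrenceSet_subset ha hρ
  refine ⟨occurrenceSet D a ρ, ⟨R', r, hR', hr, hdense, hUD.mono hsub⟩, hsub,
    locDerivable_occurrenceSet hρ, fun t ht t' ht' => abs_sub_lt_iff.2 ?_⟩
  have hle : ∀ x ∈ D, f x ≤ sSup (f '' D) := fun x hx => le_csSup habove (mem_image_of_mem f hx)
  constructor <;> linarith [hfar t ht, hfar t' ht', hle t (hsub ht), hle t' (hsub ht')]
end
end
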